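/- arXiv:1812.03567 — 4 statements merged into one kernel-verified Lean document; each statement's English description precedes it below -/
import Mathlib

section
/- Persistence of chain connectivity for large coupling (Proposition 4.3): Let (ρ, u) be a global strong solution (T* = ∞) of the pressureless Euler alignment system satisfying the connectivity assumption, let T be the connectivity time, and let η > 0 be such that the uniform fluctuation bound |δu(t)|_∞ ≤ |δu(0)|_∞ e^{−κ m t} + (2/m)|δu(0)|₂ e^{−κ η t} holds for all t < T. If κ ≥ κ₀ := (1/(r m))·(½|δu(0)|_∞ + η⁻¹|δu(0)|₂), then T = ∞; that is, for all t ≥ 0 and all x, y ∈ supp ρ₀ with |x − y| ≤ r one has |X(t,x) − X(t,y)| ≤ 3r. -/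
open MeasureTheory Metric Set Filter

noncomputable section

/-- The (topological) support of a measure on Euclidean space: points all of whose
neighborhoods have positive mass. -/
def mSupp {d : ℕ} (μ : Measure (EuclideanSpace ℝ (Fin d))) : Set (EuclideanSpace ℝ (Fin d)) :=
  {x | ∀ ε > 0, 0 < μ (Metric.ball x ε)}

/-- `S` is chain connected at scale `r` with at most `n` balls: every pair of points of `S`
is connected by a chain of at most `n` closed balls of radius `r` with centers in `S`,
consecutive balls intersecting, the first point in the first ball and the second in the last. -/
def ChainConnectedN {d : ℕ} (S : Set (EuclideanSpace ℝ (Fin d))) (r : ℝ) (n : ℕ) : Prop :=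
  ∀ x ∈ S, ∀ y ∈ S, ∃ k : ℕ, 1 ≤ k ∧ k ≤ n ∧ ∃ c : ℕ → EuclideanSpace ℝ (Fin d),
    (∀ i < k, c i ∈ S) ∧
    (∀ i, i + 1 < k →
      (Metric.closedBall (c i) r ∩ Metric.closedBall (c (i + 1)) r).Nonempty) ∧
    x ∈ Metric.closedBall (c 0) r ∧ y ∈ Metric.closedBall (c (k - 1)) r

/-- A global (`T* = ∞`) strong solution of the pressureless Euler alignment system with
communication kernel `φ` and coupling strength `κ`:  a `C¹` velocity field `u` on
`[0,∞) × ℝ^d`, its flow map `X`, a compactly supported Borel probability measure `ρ₀`,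
with `ρ(t) = X(t,·)_# ρ₀`, satisfying the momentum equation
`∂ₜ u + (u·∇)u = κ ∫ φ(|x-y|)(u(y) - u(x)) dρ(t)(y)` on the support of `ρ(t)`. -/
structure EulerAlign (d : ℕ) (φ : ℝ → ℝ) (κ : ℝ) where
  u : ℝ → EuclideanSpace ℝ (Fin d) → EuclideanSpace ℝ (Fin d)
  X : ℝ → EuclideanSpace ℝ (Fin d) → EuclideanSpace ℝ (Fin d)
  ρ₀ : Measure (EuclideanSpace ℝ (Fin d))
  prob : IsProbabilityMeasure ρ₀
  cpt : IsCompact (mSupp ρ₀)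
  u_smooth : ContDiffOn ℝ 1 (fun p : ℝ × EuclideanSpace ℝ (Fin d) => u p.1 p.2)
      (Set.Ici (0:ℝ) ×ˢ Set.univ)
  flow_zero : ∀ x, X 0 x = x
  flow_deriv : ∀ x, ∀ t ∈ Set.Ici (0:ℝ),
      HasDerivWithinAt (fun s => X s x) (u t (X t x)) (Set.Ici (0:ℝ)) t
  momentum : ∀ t ∈ Set.Ici (0:ℝ), ∀ x ∈ mSupp (ρ₀.map (X t)),
      derivWithin (fun s => u s x) (Set.Ici (0:ℝ)) t + fderiv ℝ (u t) x (u t x)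
        = κ • ∫ y, φ (‖x - y‖) • (u t y - u t x) ∂(ρ₀.map (X t))

/-- The squared `L²(dρ(t) dρ(t))` fluctuation of the velocity, `|δu(t)|₂²`. -/
def fl2sq {d : ℕ} {φ : ℝ → ℝ} {κ : ℝ} (sol : EulerAlign d φ κ) (t : ℝ) : ℝ :=
  ∫ p : EuclideanSpace ℝ (Fin d) × EuclideanSpace ℝ (Fin d),
    ‖sol.u t p.1 - sol.u t p.2‖ ^ 2
    ∂((sol.ρ₀.map (sol.X t)).prod (sol.ρ₀.map (sol.X t)))

/-- `|δu(t)|₂`. -/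
def fl2 {d : ℕ} {φ : ℝ → ℝ} {κ : ℝ} (sol : EulerAlign d φ κ) (t : ℝ) : ℝ :=
  Real.sqrt (fl2sq sol t)

/-- `|δu(t)|_∞`, the sup of `|u(t,x) - u(t,y)|` over pairs in the support of `ρ(t)`. -/
def flInf {d : ℕ} {φ : ℝ → ℝ} {κ : ℝ} (sol : EulerAlign d φ κ) (t : ℝ) : ℝ :=
  sSup ((fun p : EuclideanSpace ℝ (Fin d) × EuclideanSpace ℝ (Fin d) =>
    ‖sol.u t p.1 - sol.u t p.2‖) ''
      (mSupp (sol.ρ₀.map (sol.X t)) ×ˢ mSupp (sol.ρ₀.map (sol.X t))))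

/-! While connectivity holds on `[0, T)`, the assumed decay of `|δu|_∞` bounds the separation
speed `|u(X(s,x)) - u(X(s,y))|` of two trajectories by an integrable function of `s`, so that
`|X(T,x) - X(T,y)| ≤ |x - y| + (2 / (κ m)) (½|δu(0)|_∞ + η⁻¹|δu(0)|₂) (1 - e^{-κ(m+η)T})`.
For `κ ≥ κ₀` this is at most `3r - 2r e^{-κ(m+η)T}`, a bound with a positive margin. The flow is
Lipschitz in the initial point (Grönwall), hence jointly continuous and equicontinuous in time on
the compact support, so the margin keeps connectivity a little beyond `T`; continuous induction
on `[0, ∞)` concludes. -/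

open scoped Topology NNReal

theorem Ici_subset_of_forall_Ico_subset_mem_nhdsGE {S : Set ℝ} {a : ℝ}
    (h : ∀ T, a ≤ T → Ico a T ⊆ S → S ∈ 𝓝[≥] T) : Ici a ⊆ S := by
  by_contra hS
  obtain ⟨b, hb, hbS⟩ := not_subset.1 hS
  have hB : (Ici a \ S).Nonempty := ⟨b, hb, hbS⟩
  set c := sInf (Ici a \ S)
  have hIco : Ico a c ⊆ S := fun x hx => by
    by_contra hxS
    exact (csInf_le (⟨a, fun y hy => hy.1⟩ : BddBelow (Ici a \ S)) ⟨hx.1, hxS⟩).not_gt hx.2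
  obtain ⟨c', hcc', hc'⟩ :=
    mem_nhdsGE_iff_exists_Ico_subset.1 (h c (le_csInf hB fun x hx => hx.1) hIco)
  have hc'c : c' ≤ c := le_csInf hB fun x ⟨hax, hxS⟩ => by
    by_contra! hxc'
    rcases lt_or_ge x c with hxc | hcx
    · exact hxS (hIco ⟨hax, hxc⟩)
    · exact hxS (hc' ⟨hcx, hxc'⟩)
  exact (mem_Ioi.1 hcc').not_ge hc'c

theorem mSupp_eq_support {d : ℕ} (μ : Measure (EuclideanSpace ℝ (Fin d))) :
    mSupp μ = μ.support :=
  Set.ext fun _ => nhds_basis_ball.mem_measureSupport.symm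

namespace MeasureTheory.Measure

variable {X Y : Type*} [TopologicalSpace X] [MeasurableSpace X] [OpensMeasurableSpace X]
  [TopologicalSpace Y] [MeasurableSpace Y] [BorelSpace Y] {μ : Measure X} {f : X → Y}

theorem mem_support_map (hf : Continuous f) {x : X} (hx : x ∈ μ.support) :
    f x ∈ (μ.map f).support := by
  rw [mem_support_iff_forall] at hx ⊢
  exact fun U hU => (hx _ (hf.continuousAt hU)).trans_le (le_map_apply hf.aemeasurable U)

theorem support_map_subset_image [HereditarilyLindelofSpace X] [T2Space Y] (hf : Continuous f)
    (hμ : IsCompact μ.support) : (μ.map f).support ⊆ f '' μ.support := by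
  have hK : IsClosed (f '' μ.support) := (hμ.image hf).isClosed
  refine support_subset_of_isClosed hK ?_
  rw [mem_ae_map_iff hf.aemeasurable hK.measurableSet]
  exact mem_of_superset support_mem_ae (subset_preimage_image f _)

end MeasureTheory.Measure

theorem hasDerivAt_div_mul_one_sub_exp (A : ℝ) {α : ℝ} (hα : α ≠ 0) (s : ℝ) :
    HasDerivAt (fun s => A / α * (1 - Real.exp (-(α * s)))) (A * Real.exp (-(α * s))) s := by
  have hlin : HasDerivAt (fun s => -(α * s)) (-α) s := by
    simpa using ((hasDerivAt_id s).const_mul α).fun_neg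
  refine ((hlin.exp.const_sub 1).const_mul (A / α)).congr_deriv ?_
  field_simp

theorem norm_le_of_norm_deriv_le_exp_add_exp {E : Type*} [NormedAddCommGroup E]
    [NormedSpace ℝ E] {f f' : ℝ → E} {A B α β T : ℝ} (hα : 0 < α) (hβ : 0 < β) (hT : 0 ≤ T)
    (hf : ContinuousOn f (Icc 0 T)) (hf' : ∀ s ∈ Ico 0 T, HasDerivWithinAt f (f' s) (Ici s) s)
    (bound : ∀ s ∈ Ico 0 T, ‖f' s‖ ≤ A * Real.exp (-(α * s)) + B * Real.exp (-(β * s))) :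
    ‖f T‖ ≤ ‖f 0‖ + A / α * (1 - Real.exp (-(α * T))) + B / β * (1 - Real.exp (-(β * T))) :=
  image_norm_le_of_norm_deriv_right_le_deriv_boundary hf hf' (by simp)
    (fun s => ((hasDerivAt_const s _).add (hasDerivAt_div_mul_one_sub_exp A hα.ne' s)).add
      (hasDerivAt_div_mul_one_sub_exp B hβ.ne' s) |>.congr_deriv (by ring))
    bound ⟨hT, le_rfl⟩

theorem div_mul_one_sub_exp_add_le {A B α β T : ℝ} (hA : 0 ≤ A) (hB : 0 ≤ B) (hα : 0 < α)
    (hβ : 0 < β) (hT : 0 ≤ T) :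
    A / α * (1 - Real.exp (-(α * T))) + B / β * (1 - Real.exp (-(β * T))) ≤
      (A / α + B / β) * (1 - Real.exp (-((α + β) * T))) := by
  have hαT : Real.exp (-((α + β) * T)) ≤ Real.exp (-(α * T)) :=
    Real.exp_le_exp.2 (by nlinarith)
  have hβT : Real.exp (-((α + β) * T)) ≤ Real.exp (-(β * T)) :=
    Real.exp_le_exp.2 (by nlinarith)
  have hA' : 0 ≤ A / α := div_nonneg hA hα.le
  have hB' : 0 ≤ B / β := div_nonneg hB hβ.le
  nlinarith [mul_le_mul_of_nonneg_left hαT hA', mul_le_mul_of_nonneg_left hβT hB']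

namespace EulerAlign

variable {d : ℕ} {φ : ℝ → ℝ} {κ : ℝ} (sol : EulerAlign d φ κ)

theorem continuousOn_trajectory (x : EuclideanSpace ℝ (Fin d)) :
    ContinuousOn (fun t => sol.X t x) (Ici 0) :=
  fun t ht => (sol.flow_deriv x t ht).continuousWithinAt

theorem continuous_u {t : ℝ} (ht : 0 ≤ t) : Continuous (sol.u t) :=
  sol.u_smooth.continuousOn.comp_continuous (continuous_const.prodMk continuous_id)
    fun _ => ⟨ht, trivial⟩

theorem exists_lipschitzOnWith_u (T R : ℝ) :
    ∃ K, ∀ t ∈ Icc 0 T, LipschitzOnWith K (sol.u t) (closedBall 0 R) := by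
  obtain ⟨K, hK⟩ := (sol.u_smooth.mono (prod_mono Icc_subset_Ici_self (subset_univ _))
    ).exists_lipschitzOnWith one_ne_zero ((convex_Icc 0 T).prod (convex_closedBall 0 R))
    (isCompact_Icc.prod (isCompact_closedBall 0 R))
  refine ⟨K, fun t ht => ?_⟩
  have h := hK.comp (LipschitzWith.prodMk_left t).lipschitzOnWith fun z hz => ⟨ht, hz⟩
  rwa [mul_one] at h

theorem dist_X_le_of_forall_dist_le_one {x₀ y : EuclideanSpace ℝ (Fin d)} {K : ℝ≥0} {T : ℝ}
    (hT : 0 ≤ T)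
    (hLip : ∀ t ∈ Ico 0 T, LipschitzOnWith K (sol.u t) (closedBall (sol.X t x₀) 1))
    (htube : ∀ t ∈ Ico 0 T, dist (sol.X t y) (sol.X t x₀) ≤ 1) :
    dist (sol.X T y) (sol.X T x₀) ≤ dist y x₀ * Real.exp (K * T) := by
  simpa using dist_le_of_trajectories_ODE_of_mem hLip
    ((sol.continuousOn_trajectory y).mono Icc_subset_Ici_self)
    (fun t ht => (sol.flow_deriv y t ht.1).mono (Ici_subset_Ici.2 ht.1)) htube
    ((sol.continuousOn_trajectory x₀).mono Icc_subset_Ici_self)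
    (fun t ht => (sol.flow_deriv x₀ t ht.1).mono (Ici_subset_Ici.2 ht.1))
    (fun t _ => mem_closedBall_self zero_le_one) (δ := dist y x₀) (by simp [sol.flow_zero])
    T ⟨hT, le_rfl⟩

theorem exists_dist_X_le_mul_dist (x₀ : EuclideanSpace ℝ (Fin d)) (T : ℝ) :
    ∃ δ > 0, ∃ C, ∀ y, dist y x₀ < δ → ∀ t ∈ Icc 0 T,
      dist (sol.X t y) (sol.X t x₀) ≤ C * dist y x₀ := by
  obtain ⟨M, hM⟩ := isCompact_Icc.exists_bound_of_continuousOn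
    ((sol.continuousOn_trajectory x₀).mono (Icc_subset_Ici_self : Icc (0 : ℝ) T ⊆ Ici 0))
  obtain ⟨K, hK⟩ := sol.exists_lipschitzOnWith_u T (M + 1)
  have hLip : ∀ t ∈ Icc 0 T, LipschitzOnWith K (sol.u t) (closedBall (sol.X t x₀) 1) :=
    fun t ht => (hK t ht).mono <| closedBall_subset_closedBall' <| by
      rw [dist_zero_right]; linarith [hM t ht]
  have gronwall : ∀ y, ∀ t ∈ Icc 0 T, (∀ s ∈ Ico 0 t, dist (sol.X s y) (sol.X s x₀) ≤ 1) →
      dist (sol.X t y) (sol.X t x₀) ≤ dist y x₀ * Real.exp (K * t) :=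
    fun y t ht => sol.dist_X_le_of_forall_dist_le_one ht.1
      fun s hs => hLip s ⟨hs.1, hs.2.le.trans ht.2⟩
  refine ⟨Real.exp (-(K * T)) / 2, by positivity, Real.exp (K * T), fun y hy => ?_⟩
  have hsmall : ∀ t ≤ T, dist y x₀ * Real.exp (K * t) < 1 := fun t ht => by
    have : Real.exp (K * t) ≤ Real.exp (K * T) := Real.exp_le_exp.2 (by gcongr)
    have : Real.exp (-(K * T)) * Real.exp (K * T) = 1 := by rw [← Real.exp_add]; simp
    nlinarith [Real.exp_pos (K * t), dist_nonneg (x := y) (y := x₀)]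
  -- Grönwall applies only while the trajectory of `y` stays in the unit tube around that of `x₀`.
  have htube : Ici 0 ⊆ {t | t ≤ T → dist (sol.X t y) (sol.X t x₀) < 1} :=
    Ici_subset_of_forall_Ico_subset_mem_nhdsGE fun T' hT' hIco => by
      rcases le_or_gt T' T with hT'T | hTT'
      · have hT'1 := (gronwall y T' ⟨hT', hT'T⟩ fun t ht =>
          (hIco ht (ht.2.le.trans hT'T)).le).trans_lt (hsmall T' hT'T)
        have hcont : ContinuousWithinAt (fun t => dist (sol.X t y) (sol.X t x₀)) (Ici 0) T' :=
          (sol.continuousOn_trajectory y T' hT').dist (sol.continuousOn_trajectory x₀ T' hT')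
        exact mem_of_superset
          (nhdsWithin_mono _ (Ici_subset_Ici.2 hT') (hcont (Iio_mem_nhds hT'1))) fun t ht _ => ht
      · exact mem_of_superset (mem_nhdsWithin_of_mem_nhds (Ioi_mem_nhds hTT'))
          fun t ht htT => absurd htT (not_le.2 ht)
  intro t ht
  calc dist (sol.X t y) (sol.X t x₀) ≤ dist y x₀ * Real.exp (K * t) :=
        gronwall y t ht fun s hs => (htube hs.1 (hs.2.le.trans ht.2)).le
    _ ≤ Real.exp (K * T) * dist y x₀ := by
        rw [mul_comm]; gcongr; exact ht.2

theorem continuous_X {t : ℝ} (ht : 0 ≤ t) : Continuous (sol.X t) :=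
  continuous_iff_continuousAt.2 fun x₀ => by
    obtain ⟨δ, hδ, C, hC⟩ := sol.exists_dist_X_le_mul_dist x₀ t
    exact continuousAt_of_locally_lipschitz hδ C fun y hy => hC y hy t ⟨ht, le_rfl⟩

theorem continuousOn_X (T : ℝ) :
    ContinuousOn (fun p : ℝ × EuclideanSpace ℝ (Fin d) => sol.X p.1 p.2) (Icc 0 T ×ˢ univ) := by
  rintro ⟨t₀, x₀⟩ ⟨ht₀, -⟩
  obtain ⟨δ, hδ, C, hC⟩ := sol.exists_dist_X_le_mul_dist x₀ T
  have htime : ContinuousWithinAt (fun p : ℝ × EuclideanSpace ℝ (Fin d) => sol.X p.1 x₀)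
      (Icc 0 T ×ˢ univ) (t₀, x₀) :=
    ContinuousWithinAt.comp (g := fun t => sol.X t x₀)
      ((sol.continuousOn_trajectory x₀).mono Icc_subset_Ici_self t₀ ht₀) continuousWithinAt_fst
      fun p (hp : p ∈ Icc 0 T ×ˢ univ) => hp.1
  refine tendsto_iff_dist_tendsto_zero.2 <|
    squeeze_zero' (Eventually.of_forall fun _ => dist_nonneg)
    (g := fun p => C * dist p.2 x₀ + dist (sol.X p.1 x₀) (sol.X t₀ x₀)) ?_ ?_
  · have hnear : ∀ᶠ p : ℝ × EuclideanSpace ℝ (Fin d) in 𝓝 (t₀, x₀), dist p.2 x₀ < δ :=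
      (continuous_snd.dist continuous_const).continuousAt.eventually_lt continuousAt_const
        (by simpa using hδ)
    filter_upwards [nhdsWithin_le_nhds hnear, self_mem_nhdsWithin] with p hp hpT
    calc dist (sol.X p.1 p.2) (sol.X t₀ x₀)
        ≤ dist (sol.X p.1 p.2) (sol.X p.1 x₀) + dist (sol.X p.1 x₀) (sol.X t₀ x₀) :=
          dist_triangle _ _ _
      _ ≤ C * dist p.2 x₀ + dist (sol.X p.1 x₀) (sol.X t₀ x₀) := by
          gcongr; exact hC p.2 hp p.1 hpT.1
  · have hg : ContinuousWithinAt (fun p : ℝ × EuclideanSpace ℝ (Fin d) =>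
        C * dist p.2 x₀ + dist (sol.X p.1 x₀) (sol.X t₀ x₀)) (Icc 0 T ×ˢ univ) (t₀, x₀) :=
      (continuous_const.mul (continuous_snd.dist continuous_const)).continuousWithinAt.add
        (htime.dist continuousWithinAt_const)
    have := hg.tendsto
    rwa [dist_self, dist_self, mul_zero, add_zero] at this

theorem eventually_dist_X_lt {T : ℝ} (hT : 0 ≤ T) {ε : ℝ} (hε : 0 < ε) :
    ∀ᶠ s in 𝓝[≥] T, ∀ x ∈ mSupp sol.ρ₀, dist (sol.X s x) (sol.X T x) < ε := by
  obtain ⟨δ, hδ, H⟩ := Metric.uniformContinuousOn_iff.1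
    ((isCompact_Icc.prod sol.cpt).uniformContinuousOn_of_continuous
      ((sol.continuousOn_X (T + 1)).mono (prod_mono subset_rfl (subset_univ _))))
    ε hε
  filter_upwards [Ico_mem_nhdsGE (lt_add_of_pos_right T (lt_min hδ one_pos))] with s hs x hx
  have hsδ : s < T + δ := hs.2.trans_le (by gcongr; exact min_le_left _ _)
  have hs1 : s ≤ T + 1 := (hs.2.trans_le (by gcongr; exact min_le_right _ _)).le
  refine H (s, x) ⟨⟨hT.trans hs.1, hs1⟩, hx⟩ (T, x) ⟨⟨hT, by linarith⟩, hx⟩ ?_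
  rw [Prod.dist_eq, dist_self, max_eq_left dist_nonneg, Real.dist_eq,
    abs_of_nonneg (by linarith [hs.1])]
  linarith

theorem norm_u_X_sub_le_flInf {t : ℝ} (ht : 0 ≤ t) {x y : EuclideanSpace ℝ (Fin d)}
    (hx : x ∈ mSupp sol.ρ₀) (hy : y ∈ mSupp sol.ρ₀) :
    ‖sol.u t (sol.X t x) - sol.u t (sol.X t y)‖ ≤ flInf sol t := by
  have hXc := sol.continuous_X ht
  have hcpt : IsCompact sol.ρ₀.support := mSupp_eq_support sol.ρ₀ ▸ sol.cpt
  have hsub : mSupp (sol.ρ₀.map (sol.X t)) ⊆ sol.X t '' mSupp sol.ρ₀ := by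
    rw [mSupp_eq_support, mSupp_eq_support]
    exact Measure.support_map_subset_image hXc hcpt
  have hK := sol.cpt.image hXc
  have hcont : Continuous fun p : EuclideanSpace ℝ (Fin d) × EuclideanSpace ℝ (Fin d) =>
      ‖sol.u t p.1 - sol.u t p.2‖ := by
    have := sol.continuous_u ht
    fun_prop
  refine le_csSup (((hK.prod hK).image hcont).bddAbove.mono (image_mono (prod_mono hsub hsub)))
    ⟨(sol.X t x, sol.X t y), ⟨?_, ?_⟩, rfl⟩ <;>
  · rw [mSupp_eq_support] at *
    exact Measure.mem_support_map hXc ‹_›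

theorem flInf_nonneg (t : ℝ) : 0 ≤ flInf sol t :=
  Real.sSup_nonneg fun _ ⟨_, _, h⟩ => h ▸ norm_nonneg _

theorem norm_X_sub_le {A B α β T : ℝ} (hα : 0 < α) (hβ : 0 < β) (hT : 0 ≤ T)
    (hfl : ∀ s ∈ Ico 0 T, flInf sol s ≤ A * Real.exp (-(α * s)) + B * Real.exp (-(β * s)))
    {x y : EuclideanSpace ℝ (Fin d)} (hx : x ∈ mSupp sol.ρ₀) (hy : y ∈ mSupp sol.ρ₀) :
    ‖sol.X T x - sol.X T y‖ ≤
      ‖x - y‖ + A / α * (1 - Real.exp (-(α * T))) + B / β * (1 - Real.exp (-(β * T))) := by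
  simpa [sol.flow_zero] using norm_le_of_norm_deriv_le_exp_add_exp hα hβ hT
    (((sol.continuousOn_trajectory x).sub (sol.continuousOn_trajectory y)).mono
      Icc_subset_Ici_self)
    (fun s hs => ((sol.flow_deriv x s hs.1).sub (sol.flow_deriv y s hs.1)).mono
      (Ici_subset_Ici.2 hs.1))
    fun s hs => (sol.norm_u_X_sub_le_flInf hs.1 hx hy).trans (hfl s hs)

-- The connectivity time of the paper is the supremum of the `τ` such that `sol.ConnectedAt r s`
-- for all `s ∈ [0, τ]`.
def ConnectedAt (r t : ℝ) : Prop :=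
  ∀ x ∈ mSupp sol.ρ₀, ∀ y ∈ mSupp sol.ρ₀, ‖x - y‖ ≤ r → ‖sol.X t x - sol.X t y‖ ≤ 3 * r

theorem norm_X_sub_le_of_connectedAt {r m η T : ℝ} (hκ : 0 < κ) (hr : 0 < r) (hm : 0 < m)
    (hη : 0 < η)
    (hbound : ∀ T ≥ (0:ℝ), (∀ s ∈ Icc 0 T, sol.ConnectedAt r s) →
      ∀ t ∈ Icc (0:ℝ) T,
        flInf sol t ≤ flInf sol 0 * Real.exp (-(κ * m * t)) +
          (2 / m) * fl2 sol 0 * Real.exp (-(κ * η * t)))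
    (hκ0 : (1 / (r * m)) * ((1 / 2) * flInf sol 0 + η⁻¹ * fl2 sol 0) ≤ κ)
    (hT : 0 ≤ T) (hconn : ∀ s ∈ Ico 0 T, sol.ConnectedAt r s)
    {x y : EuclideanSpace ℝ (Fin d)} (hx : x ∈ mSupp sol.ρ₀) (hy : y ∈ mSupp sol.ρ₀) :
    ‖sol.X T x - sol.X T y‖ ≤ ‖x - y‖ + 2 * r * (1 - Real.exp (-((κ * m + κ * η) * T))) := by
  set a := flInf sol 0
  set b := fl2 sol 0
  have hκ0' : (1 / 2) * a + η⁻¹ * b ≤ κ * (r * m) := by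
    rwa [one_div_mul_eq_div, div_le_iff₀ (by positivity)] at hκ0
  have hsum : a / (κ * m) + 2 / m * b / (κ * η) ≤ 2 * r :=
    calc a / (κ * m) + 2 / m * b / (κ * η) = 2 / (κ * m) * ((1 / 2) * a + η⁻¹ * b) := by
          field_simp
      _ ≤ 2 / (κ * m) * (κ * (r * m)) := by gcongr
      _ = 2 * r := by field_simp
  have hfl : ∀ s ∈ Ico 0 T,
      flInf sol s ≤ a * Real.exp (-(κ * m * s)) + 2 / m * b * Real.exp (-(κ * η * s)) :=
    fun s hs => hbound s hs.1 (fun s' hs' => hconn s' ⟨hs'.1, hs'.2.trans_lt hs.2⟩) s ⟨hs.1, le_rfl⟩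
  have hexp : 0 ≤ 1 - Real.exp (-((κ * m + κ * η) * T)) :=
    sub_nonneg.2 (Real.exp_le_one_iff.2 (neg_nonpos.2 (mul_nonneg (by positivity) hT)))
  calc ‖sol.X T x - sol.X T y‖
      ≤ ‖x - y‖ + a / (κ * m) * (1 - Real.exp (-(κ * m * T))) +
          2 / m * b / (κ * η) * (1 - Real.exp (-(κ * η * T))) :=
        sol.norm_X_sub_le (by positivity) (by positivity) hT hfl hx hy
    _ ≤ ‖x - y‖ + (a / (κ * m) + 2 / m * b / (κ * η)) *
          (1 - Real.exp (-((κ * m + κ * η) * T))) := by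
        rw [add_assoc]
        gcongr
        exact div_mul_one_sub_exp_add_le (sol.flInf_nonneg 0)
          (mul_nonneg (by positivity) (Real.sqrt_nonneg _)) (by positivity)
          (by positivity) hT
    _ ≤ ‖x - y‖ + 2 * r * (1 - Real.exp (-((κ * m + κ * η) * T))) := by gcongr

theorem eventually_connectedAt {r m η T : ℝ} (hκ : 0 < κ) (hr : 0 < r) (hm : 0 < m)
    (hη : 0 < η)
    (hbound : ∀ T ≥ (0:ℝ), (∀ s ∈ Icc 0 T, sol.ConnectedAt r s) →
      ∀ t ∈ Icc (0:ℝ) T,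
        flInf sol t ≤ flInf sol 0 * Real.exp (-(κ * m * t)) +
          (2 / m) * fl2 sol 0 * Real.exp (-(κ * η * t)))
    (hκ0 : (1 / (r * m)) * ((1 / 2) * flInf sol 0 + η⁻¹ * fl2 sol 0) ≤ κ)
    (hT : 0 ≤ T) (hconn : ∀ s ∈ Ico 0 T, sol.ConnectedAt r s) :
    ∀ᶠ s in 𝓝[≥] T, sol.ConnectedAt r s := by
  set ε := 2 * r * Real.exp (-((κ * m + κ * η) * T))
  have hε : 0 < ε := by positivity
  filter_upwards [sol.eventually_dist_X_lt hT (half_pos hε)] with s hs x hx y hy hxy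
  have hsep := sol.norm_X_sub_le_of_connectedAt hκ hr hm hη hbound hκ0 hT hconn hx hy
  rw [← dist_eq_norm] at hsep ⊢
  calc dist (sol.X s x) (sol.X s y)
      ≤ dist (sol.X s x) (sol.X T x) + dist (sol.X T x) (sol.X T y) +
          dist (sol.X T y) (sol.X s y) := dist_triangle4 _ _ _ _
    _ ≤ 3 * r := by
        rw [dist_comm (sol.X T y)]
        linarith [hs x hx, hs y hy]

end EulerAlign

theorem connectivity_persists_general
    (d : ℕ) (φ : ℝ → ℝ) (κ r m η : ℝ) (sol : EulerAlign d φ κ)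
    (hκ : 0 < κ) (hr : 0 < r) (hm : 0 < m) (hη : 0 < η)
    (hbound : ∀ T ≥ (0:ℝ),
      (∀ s ∈ Set.Icc (0:ℝ) T, ∀ x ∈ mSupp sol.ρ₀, ∀ y ∈ mSupp sol.ρ₀,
        ‖x - y‖ ≤ r → ‖sol.X s x - sol.X s y‖ ≤ 3 * r) →
      ∀ t ∈ Set.Icc (0:ℝ) T,
        flInf sol t ≤ flInf sol 0 * Real.exp (-(κ * m * t)) +
          (2 / m) * fl2 sol 0 * Real.exp (-(κ * η * t)))
    (hκ0 : (1 / (r * m)) * ((1 / 2) * flInf sol 0 + η⁻¹ * fl2 sol 0) ≤ κ) :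
    ∀ t ≥ (0:ℝ), ∀ x ∈ mSupp sol.ρ₀, ∀ y ∈ mSupp sol.ρ₀,
      ‖x - y‖ ≤ r → ‖sol.X t x - sol.X t y‖ ≤ 3 * r := fun _ ht =>
  Ici_subset_of_forall_Ico_subset_mem_nhdsGE (fun _ hT hconn =>
    sol.eventually_connectedAt hκ hr hm hη hbound hκ0 hT hconn) ht

/-- **Persistence of chain connectivity for large coupling** (Proposition 4.3).
Let `(ρ,u)` be a global strong solution of the pressureless Euler alignment system
satisfying the connectivity assumption, and let `η > 0` be such that the uniform
fluctuation bound `|δu(t)|_∞ ≤ |δu(0)|_∞ e^{−κmt} + (2/m)|δu(0)|₂ e^{−κηt}` holds up to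
any connectivity time (i.e. on every interval `[0,T]` on which flow fluctuations at
initial scale `r` stay below `3r`).  If `κ ≥ κ₀ := (1/(rm))·(½|δu(0)|_∞ + η⁻¹|δu(0)|₂)`,
then connectivity persists for all time: `|X(t,x) − X(t,y)| ≤ 3r` for all `t ≥ 0` and all
`x, y ∈ supp ρ₀` with `|x − y| ≤ r`. -/
theorem connectivity_persists
    (d : ℕ) (φ : ℝ → ℝ) (κ r m η : ℝ) (n : ℕ) (sol : EulerAlign d φ κ)
    (hκ : 0 < κ) (hr : 0 < r) (hm : 0 < m) (hη : 0 < η)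
    (hφ0 : ∀ h, 0 ≤ φ h)
    (hφ : ∀ h, 0 < h → h ≤ 6 * r → 1 ≤ φ h)
    (hchain : ChainConnectedN (mSupp sol.ρ₀) r n)
    (hmass : ∀ c ∈ mSupp sol.ρ₀, m ≤ (sol.ρ₀ (Metric.closedBall c (r / 100))).toReal)
    (hbound : ∀ T ≥ (0:ℝ),
      (∀ s ∈ Set.Icc (0:ℝ) T, ∀ x ∈ mSupp sol.ρ₀, ∀ y ∈ mSupp sol.ρ₀,
        ‖x - y‖ ≤ r → ‖sol.X s x - sol.X s y‖ ≤ 3 * r) →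
      ∀ t ∈ Set.Icc (0:ℝ) T,
        flInf sol t ≤ flInf sol 0 * Real.exp (-(κ * m * t)) +
          (2 / m) * fl2 sol 0 * Real.exp (-(κ * η * t)))
    (hκ0 : (1 / (r * m)) * ((1 / 2) * flInf sol 0 + η⁻¹ * fl2 sol 0) ≤ κ) :
    ∀ t ≥ (0:ℝ), ∀ x ∈ mSupp sol.ρ₀, ∀ y ∈ mSupp sol.ρ₀,
      ‖x - y‖ ≤ r → ‖sol.X t x - sol.X t y‖ ≤ 3 * r :=
  connectivity_persists_general d φ κ r m η sol hκ hr hm hη hbound hκ0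
end
end

section
/- Discrete enstrophy differential inequality: For any solution of the Cucker–Smale system, for every t ≥ 0, d/dt |δv(t)|₂² ≤ −κ·(inf{φ(h) : 0 ≤ h ≤ D(t)})·|δv(t)|₂², where D(t) := max_{i,j} |x_i(t) − x_j(t)| is the diameter of the positions. -/
open MeasureTheory Metric Set Filter

noncomputable section

/-- A solution of the Cucker–Smale system for `N` agents in `ℝ^d`, with communication
kernel `φ` and coupling strength `κ`:  `ẋᵢ = vᵢ` and
`v̇ᵢ = (κ/N) ∑ⱼ φ(|xᵢ - xⱼ|)(vⱼ - vᵢ)` on `[0,∞)`. -/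
structure CSSys (d N : ℕ) (φ : ℝ → ℝ) (κ : ℝ) where
  x : ℝ → Fin N → EuclideanSpace ℝ (Fin d)
  v : ℝ → Fin N → EuclideanSpace ℝ (Fin d)
  hx : ∀ i, ∀ t ∈ Set.Ici (0:ℝ),
      HasDerivWithinAt (fun s => x s i) (v t i) (Set.Ici (0:ℝ)) t
  hv : ∀ i, ∀ t ∈ Set.Ici (0:ℝ),
      HasDerivWithinAt (fun s => v s i)
        ((κ / (N:ℝ)) • ∑ j, φ (‖x t i - x t j‖) • (v t j - v t i)) (Set.Ici (0:ℝ)) t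

/-- `|δv(t)|₂ = ((1/N²) ∑_{i,j} |vᵢ(t) - vⱼ(t)|²)^{1/2}`. -/
def dv2 {d N : ℕ} {φ : ℝ → ℝ} {κ : ℝ} (S : CSSys d N φ κ) (t : ℝ) : ℝ :=
  Real.sqrt (((N:ℝ) ^ 2)⁻¹ * ∑ i, ∑ j, ‖S.v t i - S.v t j‖ ^ 2)

/-- `|δv(t)|_∞ = max_{i,j} |vᵢ(t) - vⱼ(t)|`. -/
def dvInf {d N : ℕ} {φ : ℝ → ℝ} {κ : ℝ} (S : CSSys d N φ κ) (t : ℝ) : ℝ :=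
  ⨆ p : Fin N × Fin N, ‖S.v t p.1 - S.v t p.2‖

/-- A set of points is chain connected at scale `r`: every pair of its points is connected
by a finite chain of closed balls of radius `r` centered at points of the set, consecutive
balls intersecting, the first point in the first ball and the second point in the last. -/
def ChainConn {d : ℕ} (S : Set (EuclideanSpace ℝ (Fin d))) (r : ℝ) : Prop :=
  ∀ x ∈ S, ∀ y ∈ S, ∃ k : ℕ, 1 ≤ k ∧ ∃ c : ℕ → EuclideanSpace ℝ (Fin d),
    (∀ i < k, c i ∈ S) ∧
    (∀ i, i + 1 < k →
      (Metric.closedBall (c i) r ∩ Metric.closedBall (c (i + 1)) r).Nonempty) ∧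
    x ∈ Metric.closedBall (c 0) r ∧ y ∈ Metric.closedBall (c (k - 1)) r

/-!
Along the flow, `d/dt ∑ᵢⱼ |vᵢ - vⱼ|² = 2 ∑ᵢⱼ ⟪vᵢ - vⱼ, aᵢ - aⱼ⟫` with `aᵢ` the alignment force.
Since the weights `φ(|xᵢ - xⱼ|)` are symmetric, the forces sum to zero, which kills the cross
terms and leaves `2N ∑ᵢ ⟪vᵢ, aᵢ⟫`; pairing `(i, k)` with `(k, i)` turns this into
`-κ ∑ᵢⱼ φ(|xᵢ - xⱼ|) |vᵢ - vⱼ|²`. Every weight is at least `inf φ` over `[0, D(t)]`, which gives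
the inequality even with `2κ` in place of `κ`.
-/

open Finset RealInnerProductSpace

section Alignment

variable {ι E : Type*} [Fintype ι] [NormedAddCommGroup E] [InnerProductSpace ℝ E]

theorem sum_sum_smul_sub_eq_zero (w : ι → E) {p : ι → ι → ℝ} (hp : ∀ i j, p i j = p j i) :
    ∑ i, ∑ k, p i k • (w k - w i) = 0 := by
  simp only [smul_sub, sum_sub_distrib, sub_eq_zero]
  rw [sum_comm]
  exact sum_congr rfl fun i _ => sum_congr rfl fun k _ => by rw [hp]

theorem two_mul_sum_sum_inner_sub (w : ι → E) {p : ι → ι → ℝ} (hp : ∀ i j, p i j = p j i) :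
    2 * ∑ i, ∑ k, p i k * ⟪w i, w k - w i⟫ = -∑ i, ∑ k, p i k * ‖w i - w k‖ ^ 2 := by
  have hswap : ∑ i, ∑ k, p i k * ⟪w i, w k - w i⟫ = ∑ i, ∑ k, p i k * ⟪w k, w i - w k⟫ := by
    rw [sum_comm]
    exact sum_congr rfl fun i _ => sum_congr rfl fun k _ => by rw [hp]
  calc 2 * ∑ i, ∑ k, p i k * ⟪w i, w k - w i⟫
      = ∑ i, ∑ k, p i k * (⟪w i, w k - w i⟫ + ⟪w k, w i - w k⟫) := by
        rw [two_mul]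
        nth_rw 2 [hswap]
        simp only [mul_add, sum_add_distrib]
    _ = -∑ i, ∑ k, p i k * ‖w i - w k‖ ^ 2 := by
        simp only [← sum_neg_distrib]
        refine sum_congr rfl fun i _ => sum_congr rfl fun k _ => ?_
        rw [inner_sub_right, inner_sub_right, real_inner_comm (w i) (w k), norm_sub_sq_real,
          real_inner_self_eq_norm_sq, real_inner_self_eq_norm_sq]
        ring

theorem sum_sum_inner_sub_sub_of_sum_eq_zero (w a : ι → E) (ha : ∑ i, a i = 0) :
    ∑ i, ∑ j, ⟪w i - w j, a i - a j⟫ = 2 * Fintype.card ι * ∑ i, ⟪w i, a i⟫ := by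
  have hwa : ∑ i, ∑ j, ⟪w j, a i⟫ = 0 := by
    simp_rw [← sum_inner, ← inner_sum, ha, inner_zero_right]
  have haw : ∑ i, ∑ j, ⟪w i, a j⟫ = 0 := by
    simp_rw [← inner_sum, ha, inner_zero_right, sum_const_zero]
  simp only [inner_sub_left, inner_sub_right, sum_sub_distrib, hwa, haw, sum_const, card_univ,
    nsmul_eq_mul, ← mul_sum]
  ring

theorem sum_sum_inner_sub_alignment (w : ι → E) {p : ι → ι → ℝ} (hp : ∀ i j, p i j = p j i)
    (c : ℝ) :
    ∑ i, ∑ j, ⟪w i - w j, c • ∑ k, p i k • (w k - w i) - c • ∑ k, p j k • (w k - w j)⟫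
      = -(c * Fintype.card ι) * ∑ i, ∑ j, p i j * ‖w i - w j‖ ^ 2 := by
  have hsum : ∑ i, c • ∑ k, p i k • (w k - w i) = 0 := by
    rw [← smul_sum, sum_sum_smul_sub_eq_zero w hp, smul_zero]
  rw [sum_sum_inner_sub_sub_of_sum_eq_zero w _ hsum]
  simp only [inner_smul_right, inner_sum, ← mul_sum]
  linear_combination (c * Fintype.card ι) * two_mul_sum_sum_inner_sub w hp

end Alignment

namespace CSSys

variable {d N : ℕ} {φ : ℝ → ℝ} {κ : ℝ} (S : CSSys d N φ κ)

theorem dv2_sq (t : ℝ) : dv2 S t ^ 2 = ((N : ℝ) ^ 2)⁻¹ * ∑ i, ∑ j, ‖S.v t i - S.v t j‖ ^ 2 :=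
  Real.sq_sqrt (by positivity)

theorem hasDerivWithinAt_dv2_sq (hN : 0 < N) {t : ℝ} (ht : t ∈ Set.Ici 0) :
    HasDerivWithinAt (fun s => dv2 S s ^ 2)
      (-(2 * κ) * ((N : ℝ) ^ 2)⁻¹ *
        ∑ i, ∑ j, φ ‖S.x t i - S.x t j‖ * ‖S.v t i - S.v t j‖ ^ 2) (Set.Ici 0) t := by
  have hderiv := (HasDerivWithinAt.fun_sum (u := univ) fun i _ =>
    HasDerivWithinAt.fun_sum (u := univ) fun j _ =>
      ((S.hv i t ht).fun_sub (S.hv j t ht)).norm_sq).const_mul ((N : ℝ) ^ 2)⁻¹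
  refine (funext (dv2_sq S) ▸ hderiv).congr_deriv ?_
  have hsymm : ∀ i j, φ ‖S.x t i - S.x t j‖ = φ ‖S.x t j - S.x t i‖ := fun i j => by
    rw [norm_sub_rev]
  simp only [← mul_sum]
  rw [sum_sum_inner_sub_alignment _ hsymm, Fintype.card_fin,
    div_mul_cancel₀ _ (Nat.cast_ne_zero.mpr hN.ne')]
  ring

end CSSys

/-- **Discrete enstrophy differential inequality.**  For any solution of the Cucker–Smale
system, for every `t ≥ 0`,
`d/dt |δv(t)|₂² ≤ −κ·inf{φ(h) : 0 ≤ h ≤ D(t)}·|δv(t)|₂²`, where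
`D(t) = max_{i,j} |xᵢ(t) − xⱼ(t)|` is the diameter of the positions. -/
theorem discrete_enstrophy_inequality
    (d N : ℕ) (φ : ℝ → ℝ) (κ : ℝ) (S : CSSys d N φ κ)
    (hN : 0 < N) (hκ : 0 < κ) (hφ0 : ∀ h, 0 ≤ φ h) :
    ∀ t ∈ Set.Ici (0:ℝ), ∃ D : ℝ,
      HasDerivWithinAt (fun s => (dv2 S s) ^ 2) D (Set.Ici (0:ℝ)) t ∧
      D ≤ -κ * sInf (φ '' Set.Icc 0 (⨆ p : Fin N × Fin N, ‖S.x t p.1 - S.x t p.2‖)) *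
            (dv2 S t) ^ 2 := by
  intro t ht
  refine ⟨_, S.hasDerivWithinAt_dv2_sq hN ht, ?_⟩
  set diam := ⨆ p : Fin N × Fin N, ‖S.x t p.1 - S.x t p.2‖
  set m := sInf (φ '' Set.Icc 0 diam)
  have hφ_image : ∀ y ∈ φ '' Set.Icc 0 diam, 0 ≤ y := by
    rintro _ ⟨h, -, rfl⟩
    exact hφ0 h
  have hm_nonneg : 0 ≤ m := Real.sInf_nonneg hφ_image
  have hm_le : ∀ i j, m ≤ φ ‖S.x t i - S.x t j‖ := fun i j =>
    csInf_le ⟨0, hφ_image⟩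
      ⟨_, ⟨norm_nonneg _, le_ciSup (f := fun p : Fin N × Fin N => ‖S.x t p.1 - S.x t p.2‖)
        (Set.finite_range _).bddAbove (i, j)⟩, rfl⟩
  have hweighted : m * ∑ i, ∑ j, ‖S.v t i - S.v t j‖ ^ 2
      ≤ ∑ i, ∑ j, φ ‖S.x t i - S.x t j‖ * ‖S.v t i - S.v t j‖ ^ 2 := by
    simp only [mul_sum]
    exact sum_le_sum fun i _ => sum_le_sum fun j _ =>
      mul_le_mul_of_nonneg_right (hm_le i j) (by positivity)
  calc -(2 * κ) * ((N : ℝ) ^ 2)⁻¹ * ∑ i, ∑ j, φ ‖S.x t i - S.x t j‖ * ‖S.v t i - S.v t j‖ ^ 2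
      ≤ -(2 * κ) * ((N : ℝ) ^ 2)⁻¹ * (m * ∑ i, ∑ j, ‖S.v t i - S.v t j‖ ^ 2) :=
        mul_le_mul_of_nonpos_left hweighted
          (mul_nonpos_of_nonpos_of_nonneg (by linarith) (by positivity))
    _ = -(2 * κ) * m * dv2 S t ^ 2 := by rw [S.dv2_sq t]; ring
    _ ≤ -κ * m * dv2 S t ^ 2 := by
        linarith [mul_nonneg (mul_nonneg hκ.le hm_nonneg) (sq_nonneg (dv2 S t))]
end
end

section
/- Maximum principle for velocity fluctuations: For any solution of the Cucker–Smale system (with nonnegative kernel φ), the velocity diameter is nonincreasing: for all 0 ≤ s ≤ t, |δv(t)|_∞ ≤ |δv(s)|_∞. -/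
open MeasureTheory Metric Set Filter

noncomputable section

open scoped Topology RealInnerProductSpace

/-! The square `‖vᵢ - vⱼ‖²` of a velocity difference that is maximal at time `t` has
derivative `2⟪vᵢ - vⱼ, v̇ᵢ - v̇ⱼ⟫ ≤ 0`: every other velocity lies in the ball of radius
`‖vᵢ - vⱼ‖` about `vⱼ`, so the alignment force on agent `i` points back towards `vⱼ`, and
symmetrically for `j`. A maximum of finitely many functions whose active branches have
nonpositive right derivative cannot increase, so the velocity diameter is nonincreasing. -/

section MaxPrinciple

variable {ι : Type*} [Fintype ι] {g : ι → ℝ → ℝ}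

theorem eventually_slope_sup'_lt [Nonempty ι] {g' : ι → ℝ} {x r : ℝ}
    (hg : ∀ i, HasDerivWithinAt (g i) (g' i) (Ici x) x)
    (hactive : ∀ i, (∀ j, g j x ≤ g i x) → g' i < r) :
    ∀ᶠ z in 𝓝[>] x, slope (fun y => Finset.univ.sup' Finset.univ_nonempty (g · y)) x z < r := by
  set f := fun y => Finset.univ.sup' Finset.univ_nonempty (g · y)
  have hbranch : ∀ i, ∀ᶠ z in 𝓝[>] x, g i z < f x + r * (z - x) := by
    intro i
    by_cases hi : ∀ j, g j x ≤ g i x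
    · have hfi : f x = g i x :=
        le_antisymm (Finset.sup'_le _ _ fun j _ => hi j)
          (Finset.le_sup' (g · x) (Finset.mem_univ i))
      filter_upwards [(hg i).Ioi_of_Ici.limsup_slope_le' (lt_irrefl x) (hactive i hi),
        self_mem_nhdsWithin] with z hz (hxz : x < z)
      rw [slope_def_field, div_lt_iff₀ (sub_pos.mpr hxz)] at hz
      linarith
    · have hlt : g i x < f x := by
        obtain ⟨j, hj⟩ := not_forall.mp hi
        exact (not_le.mp hj).trans_le (Finset.le_sup' (g · x) (Finset.mem_univ j))
      have hcont : ContinuousWithinAt (fun z => g i z - r * (z - x)) (Ioi x) x :=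
        ((hg i).continuousWithinAt.mono Ioi_subset_Ici_self).sub (by fun_prop)
      filter_upwards [hcont.eventually_lt continuousWithinAt_const (by simpa using hlt)]
        with z hz
      linarith
  filter_upwards [eventually_all.mpr hbranch, self_mem_nhdsWithin] with z hz (hxz : x < z)
  rw [slope_def_field, div_lt_iff₀ (sub_pos.mpr hxz), sub_lt_iff_lt_add']
  exact (Finset.sup'_lt_iff _).mpr fun i _ => hz i

theorem forall_le_of_deriv_right_nonpos_at_max {g' : ι → ℝ → ℝ} {a b C : ℝ}
    (hcont : ∀ i, ContinuousOn (g i) (Icc a b))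
    (hderiv : ∀ i, ∀ x ∈ Ico a b, HasDerivWithinAt (g i) (g' i x) (Ici x) x)
    (hactive : ∀ x ∈ Ico a b, ∀ i, (∀ j, g j x ≤ g i x) → g' i x ≤ 0)
    (ha : ∀ i, g i a ≤ C) (hab : a ≤ b) (i : ι) : g i b ≤ C := by
  have : Nonempty ι := ⟨i⟩
  set f := fun y => Finset.univ.sup' Finset.univ_nonempty (g · y)
  have hfb : f b ≤ C :=
    image_le_of_liminf_slope_right_le_deriv_boundary (B := fun _ => C) (B' := fun _ => 0)
      (ContinuousOn.finset_sup'_apply _ fun i _ => hcont i) (Finset.sup'_le _ _ fun i _ => ha i)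
      continuousOn_const (fun x _ => hasDerivWithinAt_const x _ C)
      (fun x hx r hr => (eventually_slope_sup'_lt (fun i => hderiv i x hx)
        fun i hi => (hactive x hx i hi).trans_lt hr).frequently)
      (right_mem_Icc.mpr hab)
  exact (Finset.le_sup' (g · b) (Finset.mem_univ i)).trans hfb

end MaxPrinciple

section InnerProductSpace

variable {E : Type*} [NormedAddCommGroup E] [InnerProductSpace ℝ E]

theorem inner_sub_sub_nonpos_of_norm_sub_le {x y w : E} (h : ‖w - y‖ ≤ ‖x - y‖) :
    ⟪x - y, w - x⟫ ≤ 0 := by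
  have hsplit : w - x = (w - y) - (x - y) := by abel
  rw [hsplit, inner_sub_right, real_inner_self_eq_norm_sq]
  nlinarith [real_inner_le_norm (x - y) (w - y), norm_nonneg (x - y)]

end InnerProductSpace

namespace CSSys

variable {d N : ℕ} {φ : ℝ → ℝ} {κ : ℝ}

def accel (S : CSSys d N φ κ) (t : ℝ) (i : Fin N) : EuclideanSpace ℝ (Fin d) :=
  (κ / (N:ℝ)) • ∑ k, φ (‖S.x t i - S.x t k‖) • (S.v t k - S.v t i)

theorem hasDerivWithinAt_norm_sub_sq (S : CSSys d N φ κ) (i j : Fin N) {t : ℝ} (ht : 0 ≤ t) :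
    HasDerivWithinAt (fun u => ‖S.v u i - S.v u j‖ ^ 2)
      (2 * ⟪S.v t i - S.v t j, S.accel t i - S.accel t j⟫) (Ici 0) t :=
  ((S.hv i t ht).sub (S.hv j t ht)).norm_sq

theorem inner_accel_nonpos (S : CSSys d N φ κ) (hκ : 0 ≤ κ) (hφ : ∀ h, 0 ≤ φ h) {t : ℝ}
    {i : Fin N} {u : EuclideanSpace ℝ (Fin d)} (hu : ∀ k, ⟪u, S.v t k - S.v t i⟫ ≤ 0) :
    ⟪u, S.accel t i⟫ ≤ 0 := by
  rw [accel, inner_smul_right, inner_sum]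
  refine mul_nonpos_of_nonneg_of_nonpos (div_nonneg hκ N.cast_nonneg) (Finset.sum_nonpos ?_)
  intro k _
  rw [inner_smul_right]
  exact mul_nonpos_of_nonneg_of_nonpos (hφ _) (hu k)

theorem inner_sub_accel_sub_nonpos_of_forall_le (S : CSSys d N φ κ) (hκ : 0 ≤ κ)
    (hφ : ∀ h, 0 ≤ φ h) {t : ℝ} {i j : Fin N}
    (hmax : ∀ k l, ‖S.v t k - S.v t l‖ ≤ ‖S.v t i - S.v t j‖) :
    ⟪S.v t i - S.v t j, S.accel t i - S.accel t j⟫ ≤ 0 := by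
  have hi : ⟪S.v t i - S.v t j, S.accel t i⟫ ≤ 0 :=
    S.inner_accel_nonpos hκ hφ fun k => inner_sub_sub_nonpos_of_norm_sub_le (hmax k j)
  have hj : ⟪S.v t j - S.v t i, S.accel t j⟫ ≤ 0 := by
    refine S.inner_accel_nonpos hκ hφ fun k => inner_sub_sub_nonpos_of_norm_sub_le ?_
    rw [norm_sub_rev (S.v t j)]
    exact hmax k i
  rw [← neg_sub, inner_neg_left] at hj
  rw [inner_sub_right]
  linarith

end CSSys

theorem velocity_diameter_nonincreasing_general
    (d N : ℕ) (φ : ℝ → ℝ) (κ : ℝ) (S : CSSys d N φ κ)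
    (hκ : 0 < κ) (hφ0 : ∀ h, 0 ≤ φ h) :
    ∀ s t : ℝ, 0 ≤ s → s ≤ t → dvInf S t ≤ dvInf S s := by
  intro s t hs hst
  set g : Fin N × Fin N → ℝ → ℝ := fun p u => ‖S.v u p.1 - S.v u p.2‖ ^ 2
  have hderiv : ∀ p, ∀ x ∈ Ici s, HasDerivWithinAt (g p)
      (2 * ⟪S.v x p.1 - S.v x p.2, S.accel x p.1 - S.accel x p.2⟫) (Ici 0) x :=
    fun p x hx => S.hasDerivWithinAt_norm_sub_sq p.1 p.2 (hs.trans hx)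
  have hdv_nonneg : 0 ≤ dvInf S s := Real.iSup_nonneg fun _ => norm_nonneg _
  have hbound : ∀ p, g p t ≤ dvInf S s ^ 2 := by
    refine forall_le_of_deriv_right_nonpos_at_max
      (fun p x hx => (hderiv p x hx.1).continuousWithinAt.mono (Icc_subset_Ici_iff hst |>.mpr hs))
      (fun p x hx => (hderiv p x hx.1).mono (Ici_subset_Ici.mpr (hs.trans hx.1))) ?_ ?_ hst
    · intro x _ p hp
      have hinner := S.inner_sub_accel_sub_nonpos_of_forall_le hκ.le hφ0
        fun k l => (sq_le_sq₀ (norm_nonneg _) (norm_nonneg _)).mp (hp (k, l))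
      linarith
    · exact fun p => pow_le_pow_left₀ (norm_nonneg _)
        (le_ciSup (Finite.bddAbove_range fun q : Fin N × Fin N => ‖S.v s q.1 - S.v s q.2‖) p) 2
  exact Real.iSup_le (fun p => (sq_le_sq₀ (norm_nonneg _) hdv_nonneg).mp (hbound p)) hdv_nonneg

/-- **Maximum principle for velocity fluctuations.**  For any solution of the Cucker–Smale
system with nonnegative kernel `φ`, the velocity diameter is nonincreasing:
`|δv(t)|_∞ ≤ |δv(s)|_∞` for all `0 ≤ s ≤ t`. -/
theorem velocity_diameter_nonincreasing
    (d N : ℕ) (φ : ℝ → ℝ) (κ : ℝ) (S : CSSys d N φ κ)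
    (hN : 0 < N) (hκ : 0 < κ) (hφ0 : ∀ h, 0 ≤ φ h) :
    ∀ s t : ℝ, 0 ≤ s → s ≤ t → dvInf S t ≤ dvInf S s :=
  velocity_diameter_nonincreasing_general d N φ κ S hκ hφ0
end
end

section
/- No flocking for weak short-range coupling (counterexample of Section 6): Let φ : ℝ → [0,∞) be continuous with φ(h) = 0 for h ≥ 8, set Φ(s) := ∫₀^s φ(h) dh and M := sup_{s ≥ 0} Φ(s), and assume 0 < M < ∞. Let x, v : [0,∞) → ℝ be C¹ with ẋ = v, v̇ = −2κ·v·φ(x), x(0) = 2, v(0) = 2. If 0 < κ ≤ v(0)/(16 M), then for all t ≥ 0 one has v(t) ≥ v(0)/2 and x(t) ≥ x(0) + (v(0)/2)·t; in particular the relative velocity v(t) does not converge to 0, so the two particles do not flock. -/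
open Set Filter

/-!
Along a solution, the energy `v + 2κ Φ(x)` is conserved. Since `Φ(x(0)) ≥ 0` and `Φ ≤ M`,
the velocity can lose at most `2κM ≤ v(0)/8` and so never drops below `v(0)/2`; integrating
`ẋ = v ≥ v(0)/2` gives the linear growth of `x`.
-/

theorem eq_of_hasDerivWithinAt_Ici_zero {f : ℝ → ℝ} {a t : ℝ}
    (hf : ∀ s ∈ Ici a, HasDerivWithinAt f 0 (Ici a) s) (ht : a ≤ t) : f t = f a :=
  constant_of_has_deriv_right_zero
    (fun s hs => (hf s hs.1).continuousWithinAt.mono Icc_subset_Ici_self)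
    (fun s hs => (hf s hs.1).mono (Ici_subset_Ici.2 hs.1)) t ⟨ht, le_rfl⟩

theorem add_mul_sub_le_of_le_hasDerivWithinAt_Ici {f f' : ℝ → ℝ} {a c t : ℝ}
    (hf : ∀ s ∈ Ici a, HasDerivWithinAt f (f' s) (Ici a) s) (hc : ∀ s ∈ Ici a, c ≤ f' s)
    (ht : a ≤ t) : f a + c * (t - a) ≤ f t := by
  have hline : ∀ s, HasDerivAt (fun s => f a + c * (s - a)) c s := fun s =>
    ((((hasDerivAt_id s).sub_const a).const_mul c).const_add (f a)).congr_deriv (mul_one c)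
  refine image_le_of_deriv_right_le_deriv_boundary (f' := fun _ => c)
    (fun s _ => (hline s).continuousAt.continuousWithinAt) (fun s _ => (hline s).hasDerivWithinAt)
    (by simp) (fun s hs => (hf s hs.1).continuousWithinAt.mono Icc_subset_Ici_self)
    (fun s hs => (hf s hs.1).mono (Ici_subset_Ici.2 hs.1)) (fun s hs => hc s hs.1)
    ⟨ht, le_rfl⟩

theorem integral_le_sSup_integral_image_Ici {φ : ℝ → ℝ} (hφ0 : ∀ h, 0 ≤ φ h)
    (hbdd : BddAbove ((fun s => ∫ h in (0:ℝ)..s, φ h) '' Ici 0)) (s : ℝ) :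
    ∫ h in (0:ℝ)..s, φ h ≤ sSup ((fun s => ∫ h in (0:ℝ)..s, φ h) '' Ici 0) := by
  rcases le_or_gt 0 s with hs | hs
  · exact le_csSup hbdd ⟨s, hs, rfl⟩
  · calc ∫ h in (0:ℝ)..s, φ h = -∫ h in s..0, φ h := intervalIntegral.integral_symm s 0
      _ ≤ ∫ h in (0:ℝ)..0, φ h := by
        simpa using intervalIntegral.integral_nonneg hs.le fun u _ => hφ0 u
      _ ≤ _ := le_csSup hbdd ⟨0, self_mem_Ici, rfl⟩

theorem velocity_add_kernel_primitive_eq {φ x v : ℝ → ℝ} {κ a t : ℝ} (hφc : Continuous φ)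
    (hx : ∀ s ∈ Ici a, HasDerivWithinAt x (v s) (Ici a) s)
    (hv : ∀ s ∈ Ici a, HasDerivWithinAt v (-2 * κ * v s * φ (x s)) (Ici a) s) (ht : a ≤ t) :
    v t + 2 * κ * ∫ h in (0:ℝ)..x t, φ h = v a + 2 * κ * ∫ h in (0:ℝ)..x a, φ h := by
  refine eq_of_hasDerivWithinAt_Ici_zero (f := fun u => v u + 2 * κ * ∫ h in (0:ℝ)..x u, φ h)
    (fun s hs => ?_) ht
  have hΦx : HasDerivWithinAt (fun u => ∫ h in (0:ℝ)..x u, φ h) (φ (x s) * v s) (Ici a) s :=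
    (hφc.integral_hasStrictDerivAt 0 (x s)).hasDerivAt.comp_hasDerivWithinAt s (hx s hs)
  exact ((hv s hs).add (hΦx.const_mul (2 * κ))).congr_deriv (by ring)

theorem no_flocking_weak_coupling_general
    (φ : ℝ → ℝ) (hφc : Continuous φ) (hφ0 : ∀ h, 0 ≤ φ h)
    (M : ℝ)
    (hbdd : BddAbove ((fun s => ∫ h in (0:ℝ)..s, φ h) '' Set.Ici (0:ℝ)))
    (hM : M = sSup ((fun s => ∫ h in (0:ℝ)..s, φ h) '' Set.Ici (0:ℝ)))
    (hMpos : 0 < M)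
    (κ : ℝ) (x v : ℝ → ℝ)
    (hx : ∀ t ∈ Set.Ici (0:ℝ), HasDerivWithinAt x (v t) (Set.Ici (0:ℝ)) t)
    (hv : ∀ t ∈ Set.Ici (0:ℝ),
      HasDerivWithinAt v (-2 * κ * v t * φ (x t)) (Set.Ici (0:ℝ)) t)
    (hx0 : x 0 = 2) (hv0 : v 0 = 2)
    (hκpos : 0 < κ) (hκle : κ ≤ v 0 / (16 * M)) :
    (∀ t ≥ (0:ℝ), v 0 / 2 ≤ v t ∧ x 0 + (v 0 / 2) * t ≤ x t) ∧
      ¬ Filter.Tendsto v Filter.atTop (nhds 0) := by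
  have hΦM : ∀ s, ∫ h in (0:ℝ)..s, φ h ≤ M := hM ▸ integral_le_sSup_integral_image_Ici hφ0 hbdd
  have hΦx0 : 0 ≤ ∫ h in (0:ℝ)..x 0, φ h :=
    intervalIntegral.integral_nonneg (by rw [hx0]; norm_num) fun u _ => hφ0 u
  have hκM : κ * (16 * M) ≤ v 0 := (le_div_iff₀ (by positivity)).mp hκle
  have hvlb : ∀ t ≥ (0:ℝ), v 0 / 2 ≤ v t := fun t ht => by
    have henergy := velocity_add_kernel_primitive_eq hφc hx hv ht
    nlinarith [mul_le_mul_of_nonneg_left (hΦM (x t)) hκpos.le]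
  have hxlb : ∀ t ≥ (0:ℝ), x 0 + (v 0 / 2) * t ≤ x t := fun t ht => by
    simpa using add_mul_sub_le_of_le_hasDerivWithinAt_Ici hx hvlb ht
  refine ⟨fun t ht => ⟨hvlb t ht, hxlb t ht⟩, fun hlim => ?_⟩
  have := ge_of_tendsto hlim ((eventually_ge_atTop 0).mono hvlb)
  linarith

/-- **No flocking for weak short-range coupling** (counterexample of Section 6).
Let `φ` be a continuous nonnegative kernel vanishing on `[8,∞)`, `Φ(s) = ∫₀ˢ φ(h) dh` its
primitive and `M = sup_{s ≥ 0} Φ(s)` with `0 < M < ∞`.  For the two-particle relative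
dynamics `ẋ = v`, `v̇ = −2κvφ(x)` with `x(0) = 2`, `v(0) = 2`, if `0 < κ ≤ v(0)/(16M)` then
`v(t) ≥ v(0)/2` and `x(t) ≥ x(0) + (v(0)/2)·t` for all `t ≥ 0`; in particular the relative
velocity does not converge to `0`, so the two particles do not flock. -/
theorem no_flocking_weak_coupling
    (φ : ℝ → ℝ) (hφc : Continuous φ) (hφ0 : ∀ h, 0 ≤ φ h)
    (hφ_supp : ∀ h ≥ (8:ℝ), φ h = 0)
    (M : ℝ)
    (hbdd : BddAbove ((fun s => ∫ h in (0:ℝ)..s, φ h) '' Set.Ici (0:ℝ)))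
    (hM : M = sSup ((fun s => ∫ h in (0:ℝ)..s, φ h) '' Set.Ici (0:ℝ)))
    (hMpos : 0 < M)
    (κ : ℝ) (x v : ℝ → ℝ)
    (hx : ∀ t ∈ Set.Ici (0:ℝ), HasDerivWithinAt x (v t) (Set.Ici (0:ℝ)) t)
    (hv : ∀ t ∈ Set.Ici (0:ℝ),
      HasDerivWithinAt v (-2 * κ * v t * φ (x t)) (Set.Ici (0:ℝ)) t)
    (hx0 : x 0 = 2) (hv0 : v 0 = 2)
    (hκpos : 0 < κ) (hκle : κ ≤ v 0 / (16 * M)) :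
    (∀ t ≥ (0:ℝ), v 0 / 2 ≤ v t ∧ x 0 + (v 0 / 2) * t ≤ x t) ∧
      ¬ Filter.Tendsto v Filter.atTop (nhds 0) :=
  no_flocking_weak_coupling_general φ hφc hφ0 M hbdd hM hMpos κ x v hx hv hx0 hv0 hκpos hκle
end
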